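/- arXiv:1809.00136 — 2 statements merged into one kernel-verified Lean document; each statement's English description precedes it below -/
import Mathlib

section
/- For the (n−1)-gluing graph K_n +_{n−1} K'_n of two complete graphs on n vertices (n ≥ 5), the Ricci curvature of the edge (u_0, v_1) equals (3n−2)/(n(2n−1)), and the Wasserstein distance satisfies W(m_{u_0}, m_{v_1}) = 2(n−1)²/(n(2n−1)). -/
open scoped Classical
noncomputable section

namespace OR

variable {V : Type*}

/-- The degree of a vertex. -/
def deg (G : SimpleGraph V) (x : V) : ℕ := Nat.card (G.neighborSet x)

/-- The simple random walk measure at a vertex. -/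
def rw (G : SimpleGraph V) (x : V) : V → ℝ :=
  fun v => if G.Adj x v then ((deg G x : ℝ))⁻¹ else 0

/-- A coupling between two measures on the vertex set. -/
def IsCoupling (μ ν : V → ℝ) (A : V → V → ℝ) : Prop :=
  (∀ u v, 0 ≤ A u v) ∧
  (Function.support fun p : V × V => A p.1 p.2).Finite ∧
  (∀ u, ∑ᶠ v, A u v = μ u) ∧ (∀ v, ∑ᶠ u, A u v = ν v)

/-- The 1-Wasserstein distance w.r.t. the graph distance. -/
def W (G : SimpleGraph V) (μ ν : V → ℝ) : ℝ :=
  sInf { r | ∃ A, IsCoupling μ ν A ∧ r = ∑ᶠ u, ∑ᶠ v, A u v * (G.dist u v : ℝ) }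

/-- The Ollivier–Ricci curvature. -/
def ricci (G : SimpleGraph V) (x y : V) : ℝ :=
  1 - W G (rw G x) (rw G y) / (G.dist x y : ℝ)

/-- The number of common neighbours of `x` and `y`. -/
def tri (G : SimpleGraph V) (x y : V) : ℕ := Nat.card {w | G.Adj x w ∧ G.Adj y w}



/-- Condition for a cross edge `u_i v_j` in the `m`-gluing graph. -/
def cross (m : ℕ) {n : ℕ} (i j : Fin n) : Prop :=
  ((i : ℕ) = 0 ∧ (j : ℕ) = 0) ∨ ((i : ℕ) = 0 ∧ 1 ≤ (j : ℕ) ∧ (j : ℕ) ≤ m) ∨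
    ((j : ℕ) = 0 ∧ 1 ≤ (i : ℕ) ∧ (i : ℕ) ≤ m)

/-- Adjacency of the `m`-gluing graph: `Sum.inl` is `K_n`, `Sum.inr` is `K'_n`. -/
def glueAdj (n m : ℕ) : Fin n ⊕ Fin n → Fin n ⊕ Fin n → Prop
  | .inl i, .inl j => i ≠ j
  | .inr i, .inr j => i ≠ j
  | .inl i, .inr j => cross m i j
  | .inr j, .inl i => cross m i j

/-- The `m`-gluing graph `K_n +_m K'_n`. -/
def glue (n m : ℕ) : SimpleGraph (Fin n ⊕ Fin n) where
  Adj := glueAdj n m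
  symm := ⟨by
    rintro (i | i) (j | j) h <;> simp only [glueAdj] at h ⊢
    · exact h.symm
    · exact h
    · exact h
    · exact h.symm⟩
  loopless := ⟨by
    rintro (i | i) h <;> simp only [glueAdj] at h <;> exact h rfl⟩

end OR




section Helpers
open Finset

private lemma sum_range_abc (a b c : ℝ) :
    ∀ N, 2 ≤ N → (∑ i ∈ Finset.range N,
      (if i = 0 then a else if i = 1 then b else c)) = a + b + ((N : ℝ) - 2) * c := by
  intro N
  induction N with
  | zero => intro h; omega
  | succ N ih =>
    intro hN
    rcases Nat.lt_or_ge N 2 with h | h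
    · have hN1 : N = 1 := by omega
      subst hN1
      rw [Finset.sum_range_succ, Finset.sum_range_one]
      norm_num
    · rw [Finset.sum_range_succ, ih h, if_neg (by omega : ¬ N = 0),
        if_neg (by omega : ¬ N = 1)]
      push_cast
      ring

private lemma sum_fin3 {n : ℕ} (hn : 2 ≤ n) (f : Fin n → ℝ) (a b c : ℝ)
    (h0 : ∀ k : Fin n, (k : ℕ) = 0 → f k = a)
    (h1 : ∀ k : Fin n, (k : ℕ) = 1 → f k = b)
    (h2 : ∀ k : Fin n, 2 ≤ (k : ℕ) → f k = c) :
    (∑ k, f k) = a + b + ((n : ℝ) - 2) * c := by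
  have key : ∀ k : Fin n,
      f k = (fun i : ℕ => if i = 0 then a else if i = 1 then b else c) (k : ℕ) := by
    intro k
    by_cases hk0 : (k : ℕ) = 0
    · simp [hk0, h0 k hk0]
    · by_cases hk1 : (k : ℕ) = 1
      · simp [hk0, hk1, h1 k hk1]
      · simp [hk0, hk1, h2 k (by omega)]
  calc (∑ k, f k)
      = ∑ i ∈ Finset.range n, (if i = 0 then a else if i = 1 then b else c) := by
        rw [← Fin.sum_univ_eq_sum_range (fun i => if i = 0 then a else if i = 1 then b else c) n]
        exact Finset.sum_congr rfl fun k _ => key k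
    _ = a + b + ((n : ℝ) - 2) * c := sum_range_abc a b c n hn

private lemma sum_fin_single {n : ℕ} (j0 : Fin n) (f : Fin n → ℝ) (s : ℝ)
    (hs : f j0 = s) (h : ∀ k, k ≠ j0 → f k = 0) : (∑ k, f k) = s := by
  rw [← hs]
  exact Finset.sum_eq_single_of_mem j0 (Finset.mem_univ _) (fun k _ hk => h k hk)

private lemma sum_fin4 {n : ℕ} (j0 : Fin n) (hj0 : 2 ≤ (j0 : ℕ)) (f : Fin n → ℝ)
    (a b s c : ℝ)
    (h0 : ∀ k : Fin n, (k : ℕ) = 0 → f k = a)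
    (h1 : ∀ k : Fin n, (k : ℕ) = 1 → f k = b)
    (hs : f j0 = s)
    (h2 : ∀ k : Fin n, 2 ≤ (k : ℕ) → k ≠ j0 → f k = c) :
    (∑ k, f k) = a + b + s + ((n : ℝ) - 3) * c := by
  have hn : 2 ≤ n := by have := j0.isLt; omega
  have key : ∀ k : Fin n, f k = (if k = j0 then s - c else 0) +
      (if (k : ℕ) = 0 then a else if (k : ℕ) = 1 then b else c) := by
    intro k
    by_cases hk : k = j0
    · subst hk
      rw [if_pos rfl, if_neg (by omega), if_neg (by omega), hs]
      ring
    · rw [if_neg hk, zero_add]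
      by_cases hk0 : (k : ℕ) = 0
      · rw [if_pos hk0, h0 k hk0]
      · by_cases hk1 : (k : ℕ) = 1
        · rw [if_neg hk0, if_pos hk1, h1 k hk1]
        · rw [if_neg hk0, if_neg hk1, h2 k (by omega) hk]
  have h3 := sum_fin3 hn (fun k : Fin n => if (k : ℕ) = 0 then a else if (k : ℕ) = 1 then b else c)
    a b c (fun k hk => by simp [hk]) (fun k hk => by simp [hk])
    (fun k hk => by
      have e0 : ¬ (k : ℕ) = 0 := by omega
      have e1 : ¬ (k : ℕ) = 1 := by omega
      simp [e0, e1])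
  rw [Finset.sum_congr rfl fun k _ => key k, Finset.sum_add_distrib,
    Finset.sum_ite_eq' Finset.univ j0 (fun _ => s - c), h3]
  simp only [Finset.mem_univ, if_true]
  ring
end Helpers

section GraphLemmas
open Finset SimpleGraph

private lemma adj_ll {n : ℕ} (i j : Fin n) :
    (OR.glue n (n-1)).Adj (Sum.inl i) (Sum.inl j) ↔ i ≠ j := Iff.rfl

private lemma adj_rr {n : ℕ} (i j : Fin n) :
    (OR.glue n (n-1)).Adj (Sum.inr i) (Sum.inr j) ↔ i ≠ j := Iff.rfl

private lemma adj_lr {n : ℕ} (hn : 5 ≤ n) (i j : Fin n) :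
    (OR.glue n (n-1)).Adj (Sum.inl i) (Sum.inr j) ↔ ((i : ℕ) = 0 ∨ (j : ℕ) = 0) := by
  have hi := i.isLt; have hj := j.isLt
  show OR.cross (n-1) i j ↔ _
  unfold OR.cross
  omega

private lemma adj_rl {n : ℕ} (hn : 5 ≤ n) (i j : Fin n) :
    (OR.glue n (n-1)).Adj (Sum.inr i) (Sum.inl j) ↔ ((j : ℕ) = 0 ∨ (i : ℕ) = 0) := by
  have hi := i.isLt; have hj := j.isLt
  show OR.cross (n-1) j i ↔ _
  unfold OR.cross
  omega

private lemma natcard_sum {α β : Type*} [Fintype α] [Fintype β] (p : α ⊕ β → Prop) :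
    Nat.card {c // p c} =
      Fintype.card {a // p (Sum.inl a)} + Fintype.card {b // p (Sum.inr b)} := by
  rw [Nat.card_eq_fintype_card, Fintype.card_congr (Equiv.subtypeSum (p := p)),
    Fintype.card_sum]

private lemma deg_u0 {n : ℕ} (hn : 5 ≤ n) :
    OR.deg (OR.glue n (n-1)) (Sum.inl (⟨0, Nat.lt_of_lt_of_le (by norm_num) hn⟩ : Fin n)) = 2 * n - 1 := by
  have h : OR.deg (OR.glue n (n-1)) (Sum.inl (⟨0, Nat.lt_of_lt_of_le (by norm_num) hn⟩ : Fin n)) =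
      Fintype.card {a : Fin n // (OR.glue n (n-1)).Adj (Sum.inl ⟨0, Nat.lt_of_lt_of_le (by norm_num) hn⟩) (Sum.inl a)} +
      Fintype.card {b : Fin n // (OR.glue n (n-1)).Adj (Sum.inl ⟨0, Nat.lt_of_lt_of_le (by norm_num) hn⟩) (Sum.inr b)} :=
    natcard_sum _
  rw [h]
  have e1 : Fintype.card {a : Fin n // (OR.glue n (n-1)).Adj (Sum.inl ⟨0, Nat.lt_of_lt_of_le (by norm_num) hn⟩) (Sum.inl a)} =
      n - 1 := by
    rw [Fintype.card_congr (Equiv.subtypeEquivRight (q := fun a : Fin n => ¬ (a = ⟨0, Nat.lt_of_lt_of_le (by norm_num) hn⟩))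
      (fun a => by rw [adj_ll]; exact ne_comm))]
    rw [Fintype.card_subtype_compl, Fintype.card_fin, Fintype.card_subtype_eq]
  have e2 : Fintype.card {b : Fin n // (OR.glue n (n-1)).Adj (Sum.inl ⟨0, Nat.lt_of_lt_of_le (by norm_num) hn⟩) (Sum.inr b)} =
      n := by
    rw [Fintype.card_congr (Equiv.subtypeUnivEquiv
      (fun b => (adj_lr hn _ b).mpr (Or.inl rfl))), Fintype.card_fin]
  rw [e1, e2]
  omega

private lemma deg_v1 {n : ℕ} (hn : 5 ≤ n) :
    OR.deg (OR.glue n (n-1)) (Sum.inr (⟨1, Nat.lt_of_lt_of_le (by norm_num) hn⟩ : Fin n)) = n := by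
  have h : OR.deg (OR.glue n (n-1)) (Sum.inr (⟨1, Nat.lt_of_lt_of_le (by norm_num) hn⟩ : Fin n)) =
      Fintype.card {a : Fin n // (OR.glue n (n-1)).Adj (Sum.inr ⟨1, Nat.lt_of_lt_of_le (by norm_num) hn⟩) (Sum.inl a)} +
      Fintype.card {b : Fin n // (OR.glue n (n-1)).Adj (Sum.inr ⟨1, Nat.lt_of_lt_of_le (by norm_num) hn⟩) (Sum.inr b)} :=
    natcard_sum _
  rw [h]
  have e1 : Fintype.card {a : Fin n // (OR.glue n (n-1)).Adj (Sum.inr ⟨1, Nat.lt_of_lt_of_le (by norm_num) hn⟩) (Sum.inl a)} =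
      1 := by
    rw [Fintype.card_congr (Equiv.subtypeEquivRight (q := fun a : Fin n => a = ⟨0, Nat.lt_of_lt_of_le (by norm_num) hn⟩)
      (fun a => by rw [adj_rl hn]; simp [Fin.ext_iff]))]
    rw [Fintype.card_subtype_eq]
  have e2 : Fintype.card {b : Fin n // (OR.glue n (n-1)).Adj (Sum.inr ⟨1, Nat.lt_of_lt_of_le (by norm_num) hn⟩) (Sum.inr b)} =
      n - 1 := by
    rw [Fintype.card_congr (Equiv.subtypeEquivRight (q := fun b : Fin n => ¬ (b = ⟨1, Nat.lt_of_lt_of_le (by norm_num) hn⟩))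
      (fun b => by rw [adj_rr]; exact ne_comm))]
    rw [Fintype.card_subtype_compl, Fintype.card_fin, Fintype.card_subtype_eq]
  rw [e1, e2]
  omega

private lemma reach_L0 {n : ℕ} (hn : 5 ≤ n) (x : Fin n ⊕ Fin n) :
    (OR.glue n (n-1)).Reachable x (Sum.inl (⟨0, Nat.lt_of_lt_of_le (by norm_num) hn⟩ : Fin n)) := by
  rcases x with j | j
  · by_cases h : j = ⟨0, Nat.lt_of_lt_of_le (by norm_num) hn⟩
    · subst h; exact SimpleGraph.Reachable.refl _
    · exact ((adj_ll j _).mpr h).reachable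
  · exact ((adj_rl hn j _).mpr (Or.inl rfl)).reachable

private lemma reach_all {n : ℕ} (hn : 5 ≤ n) (x y : Fin n ⊕ Fin n) :
    (OR.glue n (n-1)).Reachable x y :=
  (reach_L0 hn x).trans (reach_L0 hn y).symm

private lemma two_le_dist {n : ℕ} (hn : 5 ≤ n) {x y : Fin n ⊕ Fin n}
    (hne : x ≠ y) (hadj : ¬ (OR.glue n (n-1)).Adj x y) : 2 ≤ (OR.glue n (n-1)).dist x y := by
  have h0 : 0 < (OR.glue n (n-1)).dist x y := (reach_all hn x y).pos_dist_of_ne hne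
  have h1 : (OR.glue n (n-1)).dist x y ≠ 1 := fun h => hadj (dist_eq_one_iff_adj.mp h)
  omega

private lemma dist_adj {n : ℕ} {x y : Fin n ⊕ Fin n}
    (h : (OR.glue n (n-1)).Adj x y) : (OR.glue n (n-1)).dist x y = 1 :=
  dist_eq_one_iff_adj.mpr h

private lemma dist_lr_two {n : ℕ} (hn : 5 ≤ n) {j k : Fin n}
    (hj : 1 ≤ (j : ℕ)) (hk : 2 ≤ (k : ℕ)) :
    (OR.glue n (n-1)).dist (Sum.inl j) (Sum.inr k) = 2 := by
  have hne : (Sum.inl j : Fin n ⊕ Fin n) ≠ Sum.inr k := by simp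
  have hadj : ¬ (OR.glue n (n-1)).Adj (Sum.inl j) (Sum.inr k) := by
    rw [adj_lr hn]; omega
  have h1 : (OR.glue n (n-1)).Adj (Sum.inl j) (Sum.inl (⟨0, Nat.lt_of_lt_of_le (by norm_num) hn⟩ : Fin n)) :=
    (adj_ll _ _).mpr (by simp [Fin.ext_iff]; omega)
  have h2 : (OR.glue n (n-1)).Adj (Sum.inl (⟨0, Nat.lt_of_lt_of_le (by norm_num) hn⟩ : Fin n)) (Sum.inr k) :=
    (adj_lr hn _ _).mpr (Or.inl rfl)
  have hle := SimpleGraph.dist_le (Walk.cons h1 (Walk.cons h2 Walk.nil))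
  simp only [Walk.length_cons, Walk.length_nil] at hle
  have := two_le_dist hn hne hadj
  omega
end GraphLemmas

section Coupling
open Finset SimpleGraph

private def Acoup (n : ℕ) : (Fin n ⊕ Fin n) → (Fin n ⊕ Fin n) → ℝ
  | .inl j, .inl k => if 1 ≤ (j : ℕ) ∧ (k : ℕ) = 0 then ((n : ℝ) * ((n : ℝ) - 1))⁻¹ else 0
  | .inl j, .inr k => if 1 ≤ (j : ℕ) then
      (if (k : ℕ) = 0 then ((n : ℝ) * (2 * (n : ℝ) - 1))⁻¹
       else if 2 ≤ (k : ℕ) then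
         ((n : ℝ) ^ 2 - 4 * (n : ℝ) + 2) /
           (((n : ℝ) - 1) * ((n : ℝ) - 2) * ((n : ℝ) * (2 * (n : ℝ) - 1)))
       else 0) else 0
  | .inr _, .inl _ => 0
  | .inr j, .inr k => if (j : ℕ) = 1 then
      (if 2 ≤ (k : ℕ) then (n : ℝ) / (((n : ℝ) - 2) * ((n : ℝ) * (2 * (n : ℝ) - 1))) else 0)
      else (if k = j then (2 * (n : ℝ) - 1)⁻¹ else 0)

private def fdual (n : ℕ) : (Fin n ⊕ Fin n) → ℝ
  | .inl j => if (j : ℕ) = 0 then 1 else 0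
  | .inr k => if 2 ≤ (k : ℕ) then 2 else 1

private lemma Acoup_ll {n : ℕ} (j k : Fin n) : Acoup n (Sum.inl j) (Sum.inl k) =
    if 1 ≤ (j : ℕ) ∧ (k : ℕ) = 0 then ((n : ℝ) * ((n : ℝ) - 1))⁻¹ else 0 := rfl
private lemma Acoup_lr {n : ℕ} (j k : Fin n) : Acoup n (Sum.inl j) (Sum.inr k) =
    if 1 ≤ (j : ℕ) then
      (if (k : ℕ) = 0 then ((n : ℝ) * (2 * (n : ℝ) - 1))⁻¹
       else if 2 ≤ (k : ℕ) then
         ((n : ℝ) ^ 2 - 4 * (n : ℝ) + 2) /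
           (((n : ℝ) - 1) * ((n : ℝ) - 2) * ((n : ℝ) * (2 * (n : ℝ) - 1)))
       else 0) else 0 := rfl
private lemma Acoup_rl {n : ℕ} (j k : Fin n) : Acoup n (Sum.inr j) (Sum.inl k) = 0 := rfl
private lemma Acoup_rr {n : ℕ} (j k : Fin n) : Acoup n (Sum.inr j) (Sum.inr k) =
    if (j : ℕ) = 1 then
      (if 2 ≤ (k : ℕ) then (n : ℝ) / (((n : ℝ) - 2) * ((n : ℝ) * (2 * (n : ℝ) - 1))) else 0)
      else (if k = j then (2 * (n : ℝ) - 1)⁻¹ else 0) := rfl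

private lemma cast_deg {n : ℕ} (hn : 5 ≤ n) : ((2 * n - 1 : ℕ) : ℝ) = 2 * (n : ℝ) - 1 := by
  have h : 1 ≤ 2 * n := by omega
  push_cast [h]
  ring

private lemma mu_l {n : ℕ} (hn : 5 ≤ n) (j : Fin n) :
    OR.rw (OR.glue n (n-1)) (Sum.inl (⟨0, Nat.lt_of_lt_of_le (by norm_num) hn⟩ : Fin n)) (Sum.inl j) =
      if (j : ℕ) = 0 then 0 else (2 * (n : ℝ) - 1)⁻¹ := by
  simp only [OR.rw, deg_u0 hn, cast_deg hn]
  by_cases h : (j : ℕ) = 0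
  · rw [if_pos h, if_neg]
    rw [adj_ll]
    simp [Fin.ext_iff, h]
  · rw [if_neg h, if_pos ((adj_ll _ _).mpr (by simp [Fin.ext_iff]; omega))]

private lemma mu_r {n : ℕ} (hn : 5 ≤ n) (k : Fin n) :
    OR.rw (OR.glue n (n-1)) (Sum.inl (⟨0, Nat.lt_of_lt_of_le (by norm_num) hn⟩ : Fin n)) (Sum.inr k) =
      (2 * (n : ℝ) - 1)⁻¹ := by
  simp only [OR.rw, deg_u0 hn, cast_deg hn]
  rw [if_pos ((adj_lr hn _ _).mpr (Or.inl rfl))]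

private lemma nu_l {n : ℕ} (hn : 5 ≤ n) (j : Fin n) :
    OR.rw (OR.glue n (n-1)) (Sum.inr (⟨1, Nat.lt_of_lt_of_le (by norm_num) hn⟩ : Fin n)) (Sum.inl j) =
      if (j : ℕ) = 0 then ((n : ℝ))⁻¹ else 0 := by
  simp only [OR.rw, deg_v1 hn]
  by_cases h : (j : ℕ) = 0
  · rw [if_pos h, if_pos ((adj_rl hn _ _).mpr (Or.inl h))]
  · rw [if_neg h, if_neg]
    rw [adj_rl hn]
    simp [h]

private lemma nu_r {n : ℕ} (hn : 5 ≤ n) (k : Fin n) :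
    OR.rw (OR.glue n (n-1)) (Sum.inr (⟨1, Nat.lt_of_lt_of_le (by norm_num) hn⟩ : Fin n)) (Sum.inr k) =
      if (k : ℕ) = 1 then 0 else ((n : ℝ))⁻¹ := by
  simp only [OR.rw, deg_v1 hn]
  by_cases h : (k : ℕ) = 1
  · rw [if_pos h, if_neg]
    rw [adj_rr]
    simp [Fin.ext_iff, h]
  · rw [if_neg h, if_pos ((adj_rr _ _).mpr (by simp [Fin.ext_iff]; omega))]

end Coupling

section MainLemmas
open Finset SimpleGraph

private lemma coupling_ok {n : ℕ} (hn : 5 ≤ n) :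
    OR.IsCoupling (OR.rw (OR.glue n (n-1)) (Sum.inl (⟨0, Nat.lt_of_lt_of_le (by norm_num) hn⟩ : Fin n)))
      (OR.rw (OR.glue n (n-1)) (Sum.inr (⟨1, Nat.lt_of_lt_of_le (by norm_num) hn⟩ : Fin n))) (Acoup n) := by
  have hnR : (5 : ℝ) ≤ (n : ℝ) := by exact_mod_cast hn
  have hn0 : (n : ℝ) ≠ 0 := by nlinarith
  have hn1 : (n : ℝ) - 1 ≠ 0 := by nlinarith
  have hn2 : (n : ℝ) - 2 ≠ 0 := by nlinarith
  have hn21 : 2 * (n : ℝ) - 1 ≠ 0 := by nlinarith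
  refine ⟨?_, Set.toFinite _, ?_, ?_⟩
  · -- nonnegativity
    have c1 : (0:ℝ) ≤ ((n:ℝ) * ((n:ℝ)-1))⁻¹ := inv_nonneg.mpr (by nlinarith)
    have c2 : (0:ℝ) ≤ ((n:ℝ) * (2*(n:ℝ)-1))⁻¹ := inv_nonneg.mpr (by nlinarith)
    have c3 : (0:ℝ) ≤ ((n:ℝ)^2 - 4*(n:ℝ) + 2) /
        (((n:ℝ)-1)*((n:ℝ)-2)*((n:ℝ)*(2*(n:ℝ)-1))) := div_nonneg (by nlinarith)
      (mul_nonneg (mul_nonneg (by nlinarith) (by nlinarith)) (by nlinarith))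
    have c4 : (0:ℝ) ≤ (2*(n:ℝ)-1)⁻¹ := inv_nonneg.mpr (by nlinarith)
    have c5 : (0:ℝ) ≤ (n:ℝ) / (((n:ℝ)-2)*((n:ℝ)*(2*(n:ℝ)-1))) :=
      div_nonneg (by nlinarith) (mul_nonneg (by nlinarith) (by nlinarith))
    rintro (j | j) (k | k)
    · rw [Acoup_ll]; split_ifs; exacts [c1, le_refl 0]
    · rw [Acoup_lr]; split_ifs; exacts [c2, c3, le_refl 0, le_refl 0]
    · rw [Acoup_rl]
    · rw [Acoup_rr]; split_ifs; exacts [c5, le_refl 0, c4, le_refl 0]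
  · -- row sums
    intro u
    rw [finsum_eq_sum_of_fintype, Fintype.sum_sum_type]
    rcases u with j | j
    · rw [mu_l hn j]
      by_cases hj : (j : ℕ) = 0
      · rw [if_pos hj]
        have z1 : (∑ k : Fin n, Acoup n (Sum.inl j) (Sum.inl k)) = 0 :=
          Finset.sum_eq_zero (fun k _ => by rw [Acoup_ll, if_neg (by omega)])
        have z2 : (∑ k : Fin n, Acoup n (Sum.inl j) (Sum.inr k)) = 0 :=
          Finset.sum_eq_zero (fun k _ => by rw [Acoup_lr, if_neg (by omega)])
        rw [z1, z2]; ring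
      · rw [if_neg hj]
        have hj1 : 1 ≤ (j : ℕ) := by omega
        have e1 : (∑ k : Fin n, Acoup n (Sum.inl j) (Sum.inl k)) = ((n:ℝ)*((n:ℝ)-1))⁻¹ :=
          sum_fin_single ⟨0, Nat.lt_of_lt_of_le (by norm_num) hn⟩ _ _
            (by rw [Acoup_ll, if_pos ⟨hj1, rfl⟩])
            (fun k hk => by
              simp only [ne_eq, Fin.ext_iff, Fin.val_mk] at hk
              rw [Acoup_ll, if_neg (by omega)])
        have e2 : (∑ k : Fin n, Acoup n (Sum.inl j) (Sum.inr k)) =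
            ((n:ℝ)*(2*(n:ℝ)-1))⁻¹ + 0 + ((n:ℝ)-2) *
              (((n:ℝ)^2 - 4*(n:ℝ) + 2) / (((n:ℝ)-1)*((n:ℝ)-2)*((n:ℝ)*(2*(n:ℝ)-1)))) :=
          sum_fin3 (by omega) _ _ _ _
            (fun k hk => by rw [Acoup_lr, if_pos hj1, if_pos hk])
            (fun k hk => by rw [Acoup_lr, if_pos hj1, if_neg (by omega), if_neg (by omega)])
            (fun k hk => by rw [Acoup_lr, if_pos hj1, if_neg (by omega), if_pos hk])
        rw [e1, e2]
        have hn21' : (n : ℝ) * 2 - 1 ≠ 0 := by linarith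
        field_simp
        ring
    · rw [mu_r hn j]
      have z1 : (∑ k : Fin n, Acoup n (Sum.inr j) (Sum.inl k)) = 0 :=
        Finset.sum_eq_zero (fun k _ => Acoup_rl j k)
      by_cases hj : (j : ℕ) = 1
      · have e2 : (∑ k : Fin n, Acoup n (Sum.inr j) (Sum.inr k)) =
            0 + 0 + ((n:ℝ)-2) * ((n:ℝ) / (((n:ℝ)-2)*((n:ℝ)*(2*(n:ℝ)-1)))) :=
          sum_fin3 (by omega) _ _ _ _
            (fun k hk => by rw [Acoup_rr, if_pos hj, if_neg (by omega)])
            (fun k hk => by rw [Acoup_rr, if_pos hj, if_neg (by omega)])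
            (fun k hk => by rw [Acoup_rr, if_pos hj, if_pos hk])
        rw [z1, e2]
        field_simp
        ring
      · have e2 : (∑ k : Fin n, Acoup n (Sum.inr j) (Sum.inr k)) = (2*(n:ℝ)-1)⁻¹ :=
          sum_fin_single j _ _
            (by rw [Acoup_rr, if_neg hj, if_pos rfl])
            (fun k hk => by rw [Acoup_rr, if_neg hj, if_neg hk])
        rw [z1, e2]; ring
  · -- column sums
    intro v
    rw [finsum_eq_sum_of_fintype, Fintype.sum_sum_type]
    rcases v with k | k
    · rw [nu_l hn k]
      have z2 : (∑ j : Fin n, Acoup n (Sum.inr j) (Sum.inl k)) = 0 :=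
        Finset.sum_eq_zero (fun j _ => Acoup_rl j k)
      by_cases hk : (k : ℕ) = 0
      · rw [if_pos hk]
        have e1 : (∑ j : Fin n, Acoup n (Sum.inl j) (Sum.inl k)) =
            0 + ((n:ℝ)*((n:ℝ)-1))⁻¹ + ((n:ℝ)-2) * ((n:ℝ)*((n:ℝ)-1))⁻¹ :=
          sum_fin3 (by omega) _ _ _ _
            (fun j hj => by rw [Acoup_ll, if_neg (by omega)])
            (fun j hj => by rw [Acoup_ll, if_pos ⟨by omega, hk⟩])
            (fun j hj => by rw [Acoup_ll, if_pos ⟨by omega, hk⟩])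
        rw [e1, z2]
        field_simp
        ring
      · rw [if_neg hk]
        have e1 : (∑ j : Fin n, Acoup n (Sum.inl j) (Sum.inl k)) = 0 :=
          Finset.sum_eq_zero (fun j _ => by rw [Acoup_ll, if_neg (by omega)])
        rw [e1, z2]; ring
    · rw [nu_r hn k]
      by_cases hk0 : (k : ℕ) = 0
      · rw [if_neg (by omega)]
        have e1 : (∑ j : Fin n, Acoup n (Sum.inl j) (Sum.inr k)) =
            0 + ((n:ℝ)*(2*(n:ℝ)-1))⁻¹ + ((n:ℝ)-2) * ((n:ℝ)*(2*(n:ℝ)-1))⁻¹ :=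
          sum_fin3 (by omega) _ _ _ _
            (fun j hj => by rw [Acoup_lr, if_neg (by omega)])
            (fun j hj => by rw [Acoup_lr, if_pos (by omega), if_pos hk0])
            (fun j hj => by rw [Acoup_lr, if_pos (by omega), if_pos hk0])
        have e2 : (∑ j : Fin n, Acoup n (Sum.inr j) (Sum.inr k)) =
            (2*(n:ℝ)-1)⁻¹ + 0 + ((n:ℝ)-2) * 0 :=
          sum_fin3 (by omega) _ _ _ _
            (fun j hj => by
              rw [Acoup_rr, if_neg (by omega), if_pos (show k = j from Fin.ext (by omega))])
            (fun j hj => by rw [Acoup_rr, if_pos hj, if_neg (by omega)])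
            (fun j hj => by
              rw [Acoup_rr, if_neg (by omega),
                if_neg (show ¬ k = j by simp only [Fin.ext_iff]; omega)])
        rw [e1, e2]
        have hn21' : (n : ℝ) * 2 - 1 ≠ 0 := by linarith
        field_simp
        ring
      · by_cases hk1 : (k : ℕ) = 1
        · rw [if_pos hk1]
          have e1 : (∑ j : Fin n, Acoup n (Sum.inl j) (Sum.inr k)) = 0 :=
            Finset.sum_eq_zero (fun j _ => by
              have h2 : ¬ 2 ≤ (k : ℕ) := by omega
              simp [Acoup_lr, hk0, h2])
          have e2 : (∑ j : Fin n, Acoup n (Sum.inr j) (Sum.inr k)) = 0 :=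
            Finset.sum_eq_zero (fun j _ => by
              by_cases hj : (j : ℕ) = 1
              · simp [Acoup_rr, hj, (show ¬ 2 ≤ (k : ℕ) by omega)]
              · simp [Acoup_rr, hj, (show ¬ k = j by simp only [Fin.ext_iff]; omega)])
          rw [e1, e2]; ring
        · have hk2 : 2 ≤ (k : ℕ) := by omega
          rw [if_neg hk1]
          have e1 : (∑ j : Fin n, Acoup n (Sum.inl j) (Sum.inr k)) =
              0 + (((n:ℝ)^2 - 4*(n:ℝ) + 2) / (((n:ℝ)-1)*((n:ℝ)-2)*((n:ℝ)*(2*(n:ℝ)-1)))) +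
                ((n:ℝ)-2) *
                  (((n:ℝ)^2 - 4*(n:ℝ) + 2) / (((n:ℝ)-1)*((n:ℝ)-2)*((n:ℝ)*(2*(n:ℝ)-1)))) :=
            sum_fin3 (by omega) _ _ _ _
              (fun j hj => by rw [Acoup_lr, if_neg (by omega)])
              (fun j hj => by rw [Acoup_lr, if_pos (by omega), if_neg (by omega), if_pos hk2])
              (fun j hj => by rw [Acoup_lr, if_pos (by omega), if_neg (by omega), if_pos hk2])
          have e2 : (∑ j : Fin n, Acoup n (Sum.inr j) (Sum.inr k)) =
              0 + ((n:ℝ) / (((n:ℝ)-2)*((n:ℝ)*(2*(n:ℝ)-1)))) + (2*(n:ℝ)-1)⁻¹ +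
                ((n:ℝ)-3) * 0 :=
            sum_fin4 k hk2 _ _ _ _ _
              (fun j hj => by
                rw [Acoup_rr, if_neg (by omega),
                  if_neg (show ¬ k = j by simp only [Fin.ext_iff]; omega)])
              (fun j hj => by rw [Acoup_rr, if_pos hj, if_pos hk2])
              (by rw [Acoup_rr, if_neg (by omega), if_pos rfl])
              (fun j hj hjk => by
                rw [Acoup_rr, if_neg (by omega), if_neg (fun h => hjk h.symm)])
          rw [e1, e2]
          have hn21' : (n : ℝ) * 2 - 1 ≠ 0 := by linarith
          field_simp
          ring
end MainLemmas

section CostLemmas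
open Finset SimpleGraph

private lemma coupling_cost {n : ℕ} (hn : 5 ≤ n) :
    (∑ᶠ u, ∑ᶠ v, Acoup n u v * ((OR.glue n (n-1)).dist u v : ℝ)) =
      2 * ((n : ℝ) - 1) ^ 2 / ((n : ℝ) * (2 * (n : ℝ) - 1)) := by
  have hnR : (5 : ℝ) ≤ (n : ℝ) := by exact_mod_cast hn
  have hn0 : (n : ℝ) ≠ 0 := by nlinarith
  have hn1 : (n : ℝ) - 1 ≠ 0 := by nlinarith
  have hn2 : (n : ℝ) - 2 ≠ 0 := by nlinarith
  have hn21 : 2 * (n : ℝ) - 1 ≠ 0 := by nlinarith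
  simp only [finsum_eq_sum_of_fintype]
  rw [Fintype.sum_sum_type]
  have rowL : ∀ j : Fin n, 1 ≤ (j : ℕ) →
      (∑ v : Fin n ⊕ Fin n, Acoup n (Sum.inl j) v * ((OR.glue n (n-1)).dist (Sum.inl j) v : ℝ)) =
        ((n:ℝ)*((n:ℝ)-1))⁻¹ + (((n:ℝ)*(2*(n:ℝ)-1))⁻¹ + 0 + ((n:ℝ)-2) *
          (((n:ℝ)^2 - 4*(n:ℝ) + 2) / (((n:ℝ)-1)*((n:ℝ)-2)*((n:ℝ)*(2*(n:ℝ)-1))) * 2)) := by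
    intro j hj1
    rw [Fintype.sum_sum_type]
    have e1 : (∑ k : Fin n, Acoup n (Sum.inl j) (Sum.inl k) *
        ((OR.glue n (n-1)).dist (Sum.inl j) (Sum.inl k) : ℝ)) = ((n:ℝ)*((n:ℝ)-1))⁻¹ :=
      sum_fin_single ⟨0, Nat.lt_of_lt_of_le (by norm_num) hn⟩ _ _
        (by
          rw [Acoup_ll, if_pos ⟨hj1, rfl⟩,
            dist_adj ((adj_ll _ _).mpr (by simp only [ne_eq, Fin.ext_iff]; omega))]
          norm_num)
        (fun k hk => by
          simp only [ne_eq, Fin.ext_iff, Fin.val_mk] at hk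
          rw [Acoup_ll, if_neg (by omega)]
          exact zero_mul _)
    have e2 : (∑ k : Fin n, Acoup n (Sum.inl j) (Sum.inr k) *
        ((OR.glue n (n-1)).dist (Sum.inl j) (Sum.inr k) : ℝ)) =
        ((n:ℝ)*(2*(n:ℝ)-1))⁻¹ + 0 + ((n:ℝ)-2) *
          (((n:ℝ)^2 - 4*(n:ℝ) + 2) / (((n:ℝ)-1)*((n:ℝ)-2)*((n:ℝ)*(2*(n:ℝ)-1))) * 2) :=
      sum_fin3 (by omega) _ _ _ _
        (fun k hk => by
          rw [Acoup_lr, if_pos hj1, if_pos hk,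
            dist_adj ((adj_lr hn _ _).mpr (Or.inr hk))]
          norm_num)
        (fun k hk => by
          rw [Acoup_lr, if_pos hj1, if_neg (by omega), if_neg (by omega)]
          exact zero_mul _)
        (fun k hk => by
          rw [Acoup_lr, if_pos hj1, if_neg (by omega), if_pos hk, dist_lr_two hn hj1 hk]
          norm_num)
    rw [e1, e2]
  have rowL0 : ∀ j : Fin n, (j : ℕ) = 0 →
      (∑ v : Fin n ⊕ Fin n, Acoup n (Sum.inl j) v * ((OR.glue n (n-1)).dist (Sum.inl j) v : ℝ)) =
        0 := by
    intro j hj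
    rw [Fintype.sum_sum_type]
    have e1 : (∑ k : Fin n, Acoup n (Sum.inl j) (Sum.inl k) *
        ((OR.glue n (n-1)).dist (Sum.inl j) (Sum.inl k) : ℝ)) = 0 :=
      Finset.sum_eq_zero (fun k _ => by rw [Acoup_ll, if_neg (by omega)]; exact zero_mul _)
    have e2 : (∑ k : Fin n, Acoup n (Sum.inl j) (Sum.inr k) *
        ((OR.glue n (n-1)).dist (Sum.inl j) (Sum.inr k) : ℝ)) = 0 :=
      Finset.sum_eq_zero (fun k _ => by rw [Acoup_lr, if_neg (by omega)]; exact zero_mul _)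
    rw [e1, e2]; ring
  have rowR1 : ∀ j : Fin n, (j : ℕ) = 1 →
      (∑ v : Fin n ⊕ Fin n, Acoup n (Sum.inr j) v * ((OR.glue n (n-1)).dist (Sum.inr j) v : ℝ)) =
        ((n:ℝ)-2) * ((n:ℝ) / (((n:ℝ)-2)*((n:ℝ)*(2*(n:ℝ)-1)))) := by
    intro j hj
    rw [Fintype.sum_sum_type]
    have e1 : (∑ k : Fin n, Acoup n (Sum.inr j) (Sum.inl k) *
        ((OR.glue n (n-1)).dist (Sum.inr j) (Sum.inl k) : ℝ)) = 0 :=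
      Finset.sum_eq_zero (fun k _ => by rw [Acoup_rl]; exact zero_mul _)
    have e2 : (∑ k : Fin n, Acoup n (Sum.inr j) (Sum.inr k) *
        ((OR.glue n (n-1)).dist (Sum.inr j) (Sum.inr k) : ℝ)) =
        0 + 0 + ((n:ℝ)-2) * ((n:ℝ) / (((n:ℝ)-2)*((n:ℝ)*(2*(n:ℝ)-1)))) :=
      sum_fin3 (by omega) _ _ _ _
        (fun k hk => by rw [Acoup_rr, if_pos hj, if_neg (by omega)]; exact zero_mul _)
        (fun k hk => by rw [Acoup_rr, if_pos hj, if_neg (by omega)]; exact zero_mul _)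
        (fun k hk => by
          rw [Acoup_rr, if_pos hj, if_pos hk,
            dist_adj ((adj_rr _ _).mpr (by simp only [ne_eq, Fin.ext_iff]; omega))]
          norm_num)
    rw [e1, e2]; ring
  have rowRo : ∀ j : Fin n, (j : ℕ) ≠ 1 →
      (∑ v : Fin n ⊕ Fin n, Acoup n (Sum.inr j) v * ((OR.glue n (n-1)).dist (Sum.inr j) v : ℝ)) =
        0 := by
    intro j hj
    rw [Fintype.sum_sum_type]
    have e1 : (∑ k : Fin n, Acoup n (Sum.inr j) (Sum.inl k) *
        ((OR.glue n (n-1)).dist (Sum.inr j) (Sum.inl k) : ℝ)) = 0 :=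
      Finset.sum_eq_zero (fun k _ => by rw [Acoup_rl]; exact zero_mul _)
    have e2 : (∑ k : Fin n, Acoup n (Sum.inr j) (Sum.inr k) *
        ((OR.glue n (n-1)).dist (Sum.inr j) (Sum.inr k) : ℝ)) = 0 :=
      sum_fin_single j _ _
        (by rw [Acoup_rr, if_neg hj, if_pos rfl, SimpleGraph.dist_self]; norm_num)
        (fun k hk => by rw [Acoup_rr, if_neg hj, if_neg hk]; exact zero_mul _)
    rw [e1, e2]; ring
  have outL : (∑ j : Fin n, ∑ v : Fin n ⊕ Fin n,
      Acoup n (Sum.inl j) v * ((OR.glue n (n-1)).dist (Sum.inl j) v : ℝ)) =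
      0 + (((n:ℝ)*((n:ℝ)-1))⁻¹ + (((n:ℝ)*(2*(n:ℝ)-1))⁻¹ + 0 + ((n:ℝ)-2) *
          (((n:ℝ)^2 - 4*(n:ℝ) + 2) / (((n:ℝ)-1)*((n:ℝ)-2)*((n:ℝ)*(2*(n:ℝ)-1))) * 2))) +
        ((n:ℝ)-2) * (((n:ℝ)*((n:ℝ)-1))⁻¹ + (((n:ℝ)*(2*(n:ℝ)-1))⁻¹ + 0 + ((n:ℝ)-2) *
          (((n:ℝ)^2 - 4*(n:ℝ) + 2) / (((n:ℝ)-1)*((n:ℝ)-2)*((n:ℝ)*(2*(n:ℝ)-1))) * 2))) :=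
    sum_fin3 (by omega) _ _ _ _
      (fun j hj => rowL0 j hj)
      (fun j hj => rowL j (by omega))
      (fun j hj => rowL j (by omega))
  have outR : (∑ j : Fin n, ∑ v : Fin n ⊕ Fin n,
      Acoup n (Sum.inr j) v * ((OR.glue n (n-1)).dist (Sum.inr j) v : ℝ)) =
      0 + ((n:ℝ)-2) * ((n:ℝ) / (((n:ℝ)-2)*((n:ℝ)*(2*(n:ℝ)-1)))) + ((n:ℝ)-2) * 0 :=
    sum_fin3 (by omega) _ _ _ _
      (fun j hj => rowRo j (by omega))
      (fun j hj => rowR1 j hj)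
      (fun j hj => rowRo j (by omega))
  rw [outL, outR]
  have hn21' : (n : ℝ) * 2 - 1 ≠ 0 := by linarith
  field_simp
  ring
end CostLemmas

section LowerBound
open Finset SimpleGraph

private lemma fdual_l {n : ℕ} (j : Fin n) :
    fdual n (Sum.inl j) = if (j : ℕ) = 0 then 1 else 0 := rfl
private lemma fdual_r {n : ℕ} (k : Fin n) :
    fdual n (Sum.inr k) = if 2 ≤ (k : ℕ) then 2 else 1 := rfl

private lemma fdual_nonneg {n : ℕ} (x : Fin n ⊕ Fin n) : 0 ≤ fdual n x := by
  rcases x with j | j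
  · rw [fdual_l]; split_ifs <;> norm_num
  · rw [fdual_r]; split_ifs <;> norm_num

private lemma fdual_le_two {n : ℕ} (x : Fin n ⊕ Fin n) : fdual n x ≤ 2 := by
  rcases x with j | j
  · rw [fdual_l]; split_ifs <;> norm_num
  · rw [fdual_r]; split_ifs <;> norm_num

private lemma key_dist {n : ℕ} (hn : 5 ≤ n) (u v : Fin n ⊕ Fin n) :
    fdual n v - fdual n u ≤ ((OR.glue n (n-1)).dist u v : ℝ) := by
  by_cases huv : u = v
  · subst huv
    simp [SimpleGraph.dist_self]
  by_cases hadj : (OR.glue n (n-1)).Adj u v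
  · rw [dist_adj hadj]
    push_cast
    rcases u with j | j <;> rcases v with k | k
    · rw [fdual_l, fdual_l]; split_ifs <;> norm_num
    · rw [fdual_l, fdual_r]
      rw [adj_lr hn] at hadj
      by_cases hj : (j : ℕ) = 0
      · rw [if_pos hj]; split_ifs <;> norm_num
      · have hk : (k : ℕ) = 0 := hadj.resolve_left hj
        rw [if_neg hj, if_neg (by omega : ¬ 2 ≤ (k : ℕ))]
        norm_num
    · rw [fdual_r, fdual_l]; split_ifs <;> norm_num
    · rw [fdual_r, fdual_r]; split_ifs <;> norm_num
  · have h2 := two_le_dist hn huv hadj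
    have h2R : (2 : ℝ) ≤ ((OR.glue n (n-1)).dist u v : ℝ) := by exact_mod_cast h2
    have := fdual_le_two (n := n) v
    have := fdual_nonneg (n := n) u
    linarith

private lemma cost_lb {n : ℕ} (hn : 5 ≤ n) (A : (Fin n ⊕ Fin n) → (Fin n ⊕ Fin n) → ℝ)
    (hA : OR.IsCoupling (OR.rw (OR.glue n (n-1)) (Sum.inl (⟨0, Nat.lt_of_lt_of_le (by norm_num) hn⟩ : Fin n)))
      (OR.rw (OR.glue n (n-1)) (Sum.inr (⟨1, Nat.lt_of_lt_of_le (by norm_num) hn⟩ : Fin n))) A) :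
    2 * ((n : ℝ) - 1) ^ 2 / ((n : ℝ) * (2 * (n : ℝ) - 1)) ≤
      ∑ᶠ u, ∑ᶠ v, A u v * ((OR.glue n (n-1)).dist u v : ℝ) := by
  have hnR : (5 : ℝ) ≤ (n : ℝ) := by exact_mod_cast hn
  have hn0 : (n : ℝ) ≠ 0 := by nlinarith
  have hn21 : 2 * (n : ℝ) - 1 ≠ 0 := by nlinarith
  obtain ⟨hpos, -, hrow, hcol⟩ := hA
  have hrow' : ∀ u, (∑ v, A u v) =
      OR.rw (OR.glue n (n-1)) (Sum.inl (⟨0, Nat.lt_of_lt_of_le (by norm_num) hn⟩ : Fin n)) u := fun u => by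
    rw [← finsum_eq_sum_of_fintype]; exact hrow u
  have hcol' : ∀ v, (∑ u, A u v) =
      OR.rw (OR.glue n (n-1)) (Sum.inr (⟨1, Nat.lt_of_lt_of_le (by norm_num) hn⟩ : Fin n)) v := fun v => by
    rw [← finsum_eq_sum_of_fintype]; exact hcol v
  simp only [finsum_eq_sum_of_fintype]
  have hSν : (∑ v : Fin n ⊕ Fin n,
      OR.rw (OR.glue n (n-1)) (Sum.inr (⟨1, Nat.lt_of_lt_of_le (by norm_num) hn⟩ : Fin n)) v * fdual n v) =
      (2 * (n : ℝ) - 2) * ((n : ℝ))⁻¹ := by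
    rw [Fintype.sum_sum_type]
    have e1 : (∑ k : Fin n,
        OR.rw (OR.glue n (n-1)) (Sum.inr (⟨1, Nat.lt_of_lt_of_le (by norm_num) hn⟩ : Fin n)) (Sum.inl k) *
          fdual n (Sum.inl k)) = ((n : ℝ))⁻¹ + 0 + ((n : ℝ) - 2) * 0 :=
      sum_fin3 (by omega) _ _ _ _
        (fun k hk => by rw [nu_l hn k, if_pos hk, fdual_l, if_pos hk]; norm_num)
        (fun k hk => by rw [nu_l hn k, if_neg (by omega)]; exact zero_mul _)
        (fun k hk => by rw [nu_l hn k, if_neg (by omega)]; exact zero_mul _)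
    have e2 : (∑ k : Fin n,
        OR.rw (OR.glue n (n-1)) (Sum.inr (⟨1, Nat.lt_of_lt_of_le (by norm_num) hn⟩ : Fin n)) (Sum.inr k) *
          fdual n (Sum.inr k)) = ((n : ℝ))⁻¹ + 0 + ((n : ℝ) - 2) * (((n : ℝ))⁻¹ * 2) :=
      sum_fin3 (by omega) _ _ _ _
        (fun k hk => by
          rw [nu_r hn k, if_neg (by omega), fdual_r, if_neg (by omega)]; norm_num)
        (fun k hk => by rw [nu_r hn k, if_pos hk]; exact zero_mul _)
        (fun k hk => by rw [nu_r hn k, if_neg (by omega), fdual_r, if_pos hk])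
    rw [e1, e2]
    field_simp
    ring
  have hSμ : (∑ u : Fin n ⊕ Fin n,
      OR.rw (OR.glue n (n-1)) (Sum.inl (⟨0, Nat.lt_of_lt_of_le (by norm_num) hn⟩ : Fin n)) u * fdual n u) =
      (2 * (n : ℝ) - 2) * (2 * (n : ℝ) - 1)⁻¹ := by
    rw [Fintype.sum_sum_type]
    have e1 : (∑ j : Fin n,
        OR.rw (OR.glue n (n-1)) (Sum.inl (⟨0, Nat.lt_of_lt_of_le (by norm_num) hn⟩ : Fin n)) (Sum.inl j) *
          fdual n (Sum.inl j)) = 0 :=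
      Finset.sum_eq_zero (fun j _ => by
        by_cases hj : (j : ℕ) = 0
        · rw [mu_l hn j, if_pos hj]; exact zero_mul _
        · rw [fdual_l, if_neg hj]; exact mul_zero _)
    have e2 : (∑ k : Fin n,
        OR.rw (OR.glue n (n-1)) (Sum.inl (⟨0, Nat.lt_of_lt_of_le (by norm_num) hn⟩ : Fin n)) (Sum.inr k) *
          fdual n (Sum.inr k)) = (2 * (n : ℝ) - 1)⁻¹ + (2 * (n : ℝ) - 1)⁻¹ +
            ((n : ℝ) - 2) * ((2 * (n : ℝ) - 1)⁻¹ * 2) :=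
      sum_fin3 (by omega) _ _ _ _
        (fun k hk => by rw [mu_r hn k, fdual_r, if_neg (by omega)]; norm_num)
        (fun k hk => by rw [mu_r hn k, fdual_r, if_neg (by omega)]; norm_num)
        (fun k hk => by rw [mu_r hn k, fdual_r, if_pos hk])
    rw [e1, e2]
    ring
  have step1 : (∑ u : Fin n ⊕ Fin n, ∑ v : Fin n ⊕ Fin n,
      A u v * (fdual n v - fdual n u)) ≤
      ∑ u : Fin n ⊕ Fin n, ∑ v : Fin n ⊕ Fin n,
        A u v * ((OR.glue n (n-1)).dist u v : ℝ) := by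
    refine Finset.sum_le_sum fun u _ => Finset.sum_le_sum fun v _ => ?_
    rcases (hpos u v).eq_or_lt with h | h
    · rw [← h, zero_mul, zero_mul]
    · exact mul_le_mul_of_nonneg_left (key_dist hn u v) h.le
  have step2 : (∑ u : Fin n ⊕ Fin n, ∑ v : Fin n ⊕ Fin n,
      A u v * (fdual n v - fdual n u)) =
      (∑ v : Fin n ⊕ Fin n,
        OR.rw (OR.glue n (n-1)) (Sum.inr (⟨1, Nat.lt_of_lt_of_le (by norm_num) hn⟩ : Fin n)) v * fdual n v) -
      (∑ u : Fin n ⊕ Fin n,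
        OR.rw (OR.glue n (n-1)) (Sum.inl (⟨0, Nat.lt_of_lt_of_le (by norm_num) hn⟩ : Fin n)) u * fdual n u) := by
    simp only [mul_sub, Finset.sum_sub_distrib]
    congr 1
    · rw [Finset.sum_comm]
      exact Finset.sum_congr rfl fun v _ => by rw [← Finset.sum_mul, hcol' v]
    · exact Finset.sum_congr rfl fun u _ => by rw [← Finset.sum_mul, hrow' u]
  have hid : 2 * ((n : ℝ) - 1) ^ 2 / ((n : ℝ) * (2 * (n : ℝ) - 1)) =
      (2 * (n : ℝ) - 2) * ((n : ℝ))⁻¹ - (2 * (n : ℝ) - 2) * (2 * (n : ℝ) - 1)⁻¹ := by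
    field_simp
    ring
  rw [hSν, hSμ] at step2
  linarith [step1, step2.ge]

private lemma W_eq {n : ℕ} (hn : 5 ≤ n) :
    OR.W (OR.glue n (n - 1)) (OR.rw (OR.glue n (n - 1)) (Sum.inl (⟨0, Nat.lt_of_lt_of_le (by norm_num) hn⟩ : Fin n)))
        (OR.rw (OR.glue n (n - 1)) (Sum.inr (⟨1, Nat.lt_of_lt_of_le (by norm_num) hn⟩ : Fin n)))
      = 2 * ((n : ℝ) - 1) ^ 2 / ((n : ℝ) * (2 * n - 1)) := by
  have hmem : 2 * ((n : ℝ) - 1) ^ 2 / ((n : ℝ) * (2 * n - 1)) ∈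
      { r | ∃ A, OR.IsCoupling
          (OR.rw (OR.glue n (n - 1)) (Sum.inl (⟨0, Nat.lt_of_lt_of_le (by norm_num) hn⟩ : Fin n)))
          (OR.rw (OR.glue n (n - 1)) (Sum.inr (⟨1, Nat.lt_of_lt_of_le (by norm_num) hn⟩ : Fin n))) A ∧
        r = ∑ᶠ u, ∑ᶠ v, A u v * ((OR.glue n (n - 1)).dist u v : ℝ) } :=
    ⟨Acoup n, coupling_ok hn, (coupling_cost hn).symm⟩
  have hlb : ∀ r ∈ { r | ∃ A, OR.IsCoupling
          (OR.rw (OR.glue n (n - 1)) (Sum.inl (⟨0, Nat.lt_of_lt_of_le (by norm_num) hn⟩ : Fin n)))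
          (OR.rw (OR.glue n (n - 1)) (Sum.inr (⟨1, Nat.lt_of_lt_of_le (by norm_num) hn⟩ : Fin n))) A ∧
        r = ∑ᶠ u, ∑ᶠ v, A u v * ((OR.glue n (n - 1)).dist u v : ℝ) },
      2 * ((n : ℝ) - 1) ^ 2 / ((n : ℝ) * (2 * n - 1)) ≤ r := by
    rintro r ⟨A, hA, rfl⟩
    exact cost_lb hn A hA
  rw [OR.W]
  exact le_antisymm (csInf_le ⟨_, fun r hr => hlb r hr⟩ hmem) (le_csInf ⟨_, hmem⟩ hlb)

end LowerBound


theorem glue_ricci_cross (n : ℕ) (hn : 5 ≤ n) :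
    OR.ricci (OR.glue n (n - 1)) (Sum.inl (⟨0, by omega⟩ : Fin n))
        (Sum.inr (⟨1, by omega⟩ : Fin n)) = (3 * (n : ℝ) - 2) / ((n : ℝ) * (2 * n - 1)) ∧
    OR.W (OR.glue n (n - 1)) (OR.rw (OR.glue n (n - 1)) (Sum.inl (⟨0, by omega⟩ : Fin n)))
        (OR.rw (OR.glue n (n - 1)) (Sum.inr (⟨1, by omega⟩ : Fin n)))
      = 2 * ((n : ℝ) - 1) ^ 2 / ((n : ℝ) * (2 * n - 1)) := by
  have hnR : (5 : ℝ) ≤ (n : ℝ) := by exact_mod_cast hn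
  have hn0 : (n : ℝ) ≠ 0 := by nlinarith
  have hn21 : 2 * (n : ℝ) - 1 ≠ 0 := by nlinarith
  refine ⟨?_, W_eq hn⟩
  rw [OR.ricci, W_eq hn, dist_adj ((adj_lr hn _ _).mpr (Or.inl rfl))]
  push_cast
  rw [div_one]
  field_simp
  ring
end
end

section
/- For n ≥ 5 and 1 ≤ m ≤ n−2, the 1-Wasserstein distance between the random-walk measures at u_0 and v_0 in the m-gluing graph K_n +_m K'_n equals (3n − 3m − 4)/(n + m). -/
open scoped Classical
noncomputable section

/-!
Weak Kantorovich duality sandwiches `W`: every coupling bounds it from above, and `∑ f μ - ∑ f ν`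
bounds it from below for every 1-Lipschitz `f`. The coupling comes from the involution swapping
`u_0 ↔ u_{m+1}`, `v_0 ↔ v_{m+1}` and `u_i ↔ v_i` for `i ≥ m + 2`, which maps the neighbourhood of
`u_0` onto that of `v_0`; it moves mass `1/(n+m)` over distances `1`, `1` and `3` (the last one
`n - m - 2` times). The potential taking the values `2, 3, 1, 0` on `u_{≤m}, u_{>m}, v_{≤m}, v_{>m}`
changes by at most `1` along edges and drops by exactly these distances, so both bounds equal
`(3n - 3m - 4)/(n + m)`.
-/

open SimpleGraph Finset

theorem SimpleGraph.Walk.sub_le_length {V : Type*} {G : SimpleGraph V} {f : V → ℝ}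
    (hf : ∀ x y, G.Adj x y → f x - f y ≤ 1) {x y : V} (p : G.Walk x y) :
    f x - f y ≤ p.length := by
  induction p with
  | nil => simp
  | cons h _ ih => rw [Walk.length_cons, Nat.cast_succ]; linarith [hf _ _ h]

theorem SimpleGraph.Connected.sub_le_dist {V : Type*} {G : SimpleGraph V} (hG : G.Connected)
    {f : V → ℝ} (hf : ∀ x y, G.Adj x y → f x - f y ≤ 1) (x y : V) :
    f x - f y ≤ G.dist x y := by
  obtain ⟨p, hp⟩ := hG.exists_walk_length_eq_dist x y
  exact hp ▸ p.sub_le_length hf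

namespace OR

section RandomWalk

variable {V : Type*} {G : SimpleGraph V}

theorem rw_apply_eq_of_adj_iff {x y : V} (e : V ≃ V)
    (h : ∀ u, G.Adj y (e u) ↔ G.Adj x u) (u : V) : rw G y (e u) = rw G x u := by
  have hdeg : deg G x = deg G y :=
    Nat.card_congr (e.subtypeEquiv fun u => (h u).symm)
  simp only [rw, h, hdeg]

theorem rw_apply (x v : V) :
    rw G x v = (deg G x : ℝ)⁻¹ * if G.Adj x v then 1 else 0 := by
  simp [rw]

theorem rw_nonneg (x v : V) : 0 ≤ rw G x v := by
  unfold rw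
  split_ifs <;> positivity

theorem adj_of_rw_ne_zero {x v : V} (h : rw G x v ≠ 0) :
    G.Adj x v := by
  by_contra hxv
  simp [rw, hxv] at h

end RandomWalk

section Fintype

variable {V : Type*} [Fintype V] {G : SimpleGraph V} {μ ν : V → ℝ}

theorem deg_eq_sum_ite (x : V) :
    (deg G x : ℝ) = ∑ y, if G.Adj x y then 1 else 0 := by
  rw [Finset.sum_boole, deg, Nat.card_eq_fintype_card, ← Set.toFinset_card]
  simp

theorem IsCoupling.sub_le_cost {A : V → V → ℝ} (hA : IsCoupling μ ν A) {f : V → ℝ}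
    (hf : ∀ x y, f x - f y ≤ G.dist x y) :
    ∑ u, μ u * f u - ∑ v, ν v * f v ≤ ∑ u, ∑ v, A u v * G.dist u v := by
  obtain ⟨hA0, -, hrow, hcol⟩ := hA
  simp only [finsum_eq_sum_of_fintype] at hrow hcol
  calc ∑ u, μ u * f u - ∑ v, ν v * f v = ∑ u, ∑ v, A u v * (f u - f v) := by
        simp only [mul_sub, sum_sub_distrib]
        rw [sum_comm (f := fun u v => A u v * f v)]
        simp only [← sum_mul, hrow, hcol]
    _ ≤ _ := sum_le_sum fun u _ => sum_le_sum fun v _ =>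
        mul_le_mul_of_nonneg_left (hf u v) (hA0 u v)

theorem W_eq_of_isCoupling_of_cost_le {A : V → V → ℝ} (hA : IsCoupling μ ν A) {f : V → ℝ}
    (hf : ∀ x y, f x - f y ≤ G.dist x y)
    (hcost : ∑ u, ∑ v, A u v * G.dist u v ≤ ∑ u, μ u * f u - ∑ v, ν v * f v) :
    W G μ ν = ∑ u, μ u * f u - ∑ v, ν v * f v := by
  have hlower : ∀ r ∈ {r | ∃ A, IsCoupling μ ν A ∧ r = ∑ᶠ u, ∑ᶠ v, A u v * (G.dist u v : ℝ)},
      ∑ u, μ u * f u - ∑ v, ν v * f v ≤ r := by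
    rintro r ⟨B, hB, rfl⟩
    simpa only [finsum_eq_sum_of_fintype] using hB.sub_le_cost hf
  refine le_antisymm ((csInf_le ⟨_, hlower⟩ ⟨A, hA, rfl⟩).trans ?_)
    (le_csInf ⟨_, A, hA, rfl⟩ hlower)
  simpa only [finsum_eq_sum_of_fintype] using hcost

theorem isCoupling_of_perm (e : Equiv.Perm V) (hμ : ∀ u, 0 ≤ μ u) (hν : ∀ u, ν (e u) = μ u) :
    IsCoupling μ ν (fun u v => if v = e u then μ u else 0) := by
  refine ⟨fun u v => ?_, Set.toFinite _, fun u => ?_, fun v => ?_⟩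
  · dsimp only
    split_ifs
    exacts [hμ u, le_rfl]
  · simp [finsum_eq_sum_of_fintype]
  · simp only [finsum_eq_sum_of_fintype, ← Equiv.symm_apply_eq, sum_ite_eq, mem_univ, if_true]
    rw [← hν, e.apply_symm_apply]

theorem W_eq_of_perm (e : Equiv.Perm V) (hμ : ∀ u, 0 ≤ μ u) (hν : ∀ u, ν (e u) = μ u)
    {f : V → ℝ} (hf : ∀ x y, f x - f y ≤ G.dist x y)
    (hdist : ∀ u, μ u ≠ 0 → G.dist u (e u) ≤ f u - f (e u)) :
    W G μ ν = ∑ u, μ u * (f u - f (e u)) := by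
  have hpot : ∑ u, μ u * f u - ∑ v, ν v * f v = ∑ u, μ u * (f u - f (e u)) := by
    rw [← Equiv.sum_comp e (fun v => ν v * f v), ← sum_sub_distrib]
    simp only [hν, mul_sub]
  rw [← hpot]
  refine W_eq_of_isCoupling_of_cost_le (isCoupling_of_perm e hμ hν) hf
    (hpot ▸ sum_le_sum fun u _ => ?_)
  by_cases hu : μ u = 0
  · simp [hu]
  · simpa [ite_mul] using mul_le_mul_of_nonneg_left (hdist u hu) (hμ u)

end Fintype

section Gluing

variable {n m : ℕ}

@[simp] theorem glue_adj_inl_inl {i j : Fin n} :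
    (glue n m).Adj (.inl i) (.inl j) ↔ i ≠ j := Iff.rfl

@[simp] theorem glue_adj_inr_inr {i j : Fin n} :
    (glue n m).Adj (.inr i) (.inr j) ↔ i ≠ j := Iff.rfl

@[simp] theorem glue_adj_inl_inr {i j : Fin n} :
    (glue n m).Adj (.inl i) (.inr j) ↔ cross m i j := Iff.rfl

@[simp] theorem glue_adj_inr_inl {i j : Fin n} :
    (glue n m).Adj (.inr j) (.inl i) ↔ cross m i j := Iff.rfl

theorem glue_connected (hn : 0 < n) : (glue n m).Connected := by
  rw [connected_iff_exists_forall_reachable]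
  refine ⟨.inl ⟨0, hn⟩, ?_⟩
  have hbridge : (glue n m).Adj (.inl ⟨0, hn⟩) (.inr ⟨0, hn⟩) := by simp [cross]
  have hside : ∀ i : Fin n, (glue n m).Reachable (.inl ⟨0, hn⟩) (.inl i) ∧
      (glue n m).Reachable (.inr ⟨0, hn⟩) (.inr i) := fun i => by
    by_cases hi : (⟨0, hn⟩ : Fin n) = i
    · subst hi; exact ⟨.refl _, .refl _⟩
    · exact ⟨(glue_adj_inl_inl.2 hi).reachable, (glue_adj_inr_inr.2 hi).reachable⟩
  rintro (i | i)
  exacts [(hside i).1, hbridge.reachable.trans (hside i).2]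

def gluePotential (n m : ℕ) : Fin n ⊕ Fin n → ℝ
  | .inl i => if (i : ℕ) ≤ m then 2 else 3
  | .inr j => if (j : ℕ) ≤ m then 1 else 0

theorem gluePotential_sub_le_one_of_adj {x y : Fin n ⊕ Fin n} (hxy : (glue n m).Adj x y) :
    gluePotential n m x - gluePotential n m y ≤ 1 := by
  rcases x with i | i <;> rcases y with j | j <;>
    simp only [glue_adj_inl_inl, glue_adj_inr_inr, glue_adj_inl_inr, glue_adj_inr_inl, cross]
      at hxy <;>
    simp only [gluePotential] <;> split_ifs <;> norm_num <;> omega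

def glueSwap (n m : ℕ) (h : m + 1 < n) : Fin n ⊕ Fin n → Fin n ⊕ Fin n
  | .inl i => if (i : ℕ) = 0 then .inl ⟨m + 1, h⟩ else if (i : ℕ) = m + 1 then .inl ⟨0, by omega⟩
      else if m + 2 ≤ (i : ℕ) then .inr i else .inl i
  | .inr j => if (j : ℕ) = 0 then .inr ⟨m + 1, h⟩ else if (j : ℕ) = m + 1 then .inr ⟨0, by omega⟩
      else if m + 2 ≤ (j : ℕ) then .inl j else .inr j

theorem glueSwap_involutive (h : m + 1 < n) : Function.Involutive (glueSwap n m h) := by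
  rintro (i | i) <;> simp only [glueSwap] <;> split_ifs <;> simp_all [Fin.ext_iff]

theorem glue_adj_inr_zero_glueSwap (h : m + 1 < n) (u : Fin n ⊕ Fin n) :
    (glue n m).Adj (.inr ⟨0, by omega⟩) (glueSwap n m h u) ↔
      (glue n m).Adj (.inl ⟨0, by omega⟩) u := by
  rcases u with i | i <;> simp only [glueSwap] <;> split_ifs <;>
    simp_all [cross, Fin.ext_iff] <;> omega

theorem dist_glueSwap_le (h : m + 1 < n) (u : Fin n ⊕ Fin n)
    (hu : (glue n m).Adj (.inl ⟨0, by omega⟩) u) :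
    (glue n m).dist u (glueSwap n m h u) ≤
      gluePotential n m u - gluePotential n m (glueSwap n m h u) := by
  rcases u with i | j
  · have hi : (i : ℕ) ≠ 0 := by simpa [Fin.ext_iff, eq_comm] using hu
    simp only [glueSwap, if_neg hi]
    split_ifs with h1 h2
    · rw [dist_eq_one_iff_adj.2 (by simp [Fin.ext_iff]; omega)]
      norm_num [gluePotential, h1]
    · rw [show gluePotential n m (.inl i) - gluePotential n m (.inr i) = ((3 : ℕ) : ℝ) by
        norm_num [gluePotential, show ¬ (i : ℕ) ≤ m by omega]]
      have h0 : 0 < n := by omega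
      have hl : (glue n m).Adj (.inl i) (.inl ⟨0, h0⟩) := by simp [Fin.ext_iff]; omega
      have hb : (glue n m).Adj (.inl ⟨0, h0⟩) (.inr ⟨0, h0⟩) := by simp [cross]
      have hr : (glue n m).Adj (.inr ⟨0, h0⟩) (.inr i) := by simp [Fin.ext_iff]; omega
      exact Nat.cast_le.2 (dist_le (.cons hl (.cons hb (.cons hr .nil))))
    · simp [gluePotential]
  · have hj : (j : ℕ) ≤ m := by simp [cross] at hu; omega
    simp only [glueSwap, if_neg (show (j : ℕ) ≠ m + 1 by omega),
      if_neg (show ¬ m + 2 ≤ (j : ℕ) by omega)]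
    split_ifs with h0
    · rw [dist_eq_one_iff_adj.2 (by simp [Fin.ext_iff]; omega)]
      norm_num [gluePotential, h0]
    · simp [gluePotential]

-- Everything in the gluing is constant on the index classes `0`, `1..m`, `m + 1` and `≥ m + 2`.
def indexProfile (m : ℕ) (a b c d : ℝ) (k : ℕ) : ℝ :=
  if k = 0 then a else if k ≤ m then b else if k = m + 1 then c else d

theorem indexProfile_mul (a b c d a' b' c' d' : ℝ) (k : ℕ) :
    indexProfile m a b c d k * indexProfile m a' b' c' d' k =
      indexProfile m (a * a') (b * b') (c * c') (d * d') k := by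
  unfold indexProfile
  split_ifs <;> rfl

theorem sum_range_indexProfile (h : m + 2 ≤ n) (a b c d : ℝ) :
    ∑ k ∈ range n, indexProfile m a b c d k = a + m * b + c + (n - m - 2) * d := by
  have hlow : ∀ k ∈ range m, indexProfile m a b c d (k + 1) = b := fun k hk => by
    simp only [indexProfile, mem_range] at hk ⊢
    rw [if_neg k.succ_ne_zero, if_pos (by omega)]
  have hhigh : ∀ k ∈ Ico (m + 2) n, indexProfile m a b c d k = d := fun k hk => by
    simp only [indexProfile, mem_Ico] at hk ⊢
    rw [if_neg (by omega), if_neg (by omega), if_neg (by omega)]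
  rw [← sum_range_add_sum_Ico _ h, sum_range_succ, sum_range_succ', sum_congr rfl hlow,
    sum_congr rfl hhigh]
  simp [indexProfile, Nat.cast_sub h]
  ring

theorem glue_adj_inl_zero_inl_indicator (hn : 0 < n) (i : Fin n) :
    (if (glue n m).Adj (.inl ⟨0, hn⟩) (.inl i) then (1 : ℝ) else 0) =
      indexProfile m 0 1 1 1 i := by
  simp only [indexProfile, glue_adj_inl_inl, ne_eq, Fin.ext_iff]
  split_ifs <;> first | rfl | omega

theorem glue_adj_inl_zero_inr_indicator (hn : 0 < n) (j : Fin n) :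
    (if (glue n m).Adj (.inl ⟨0, hn⟩) (.inr j) then (1 : ℝ) else 0) =
      indexProfile m 1 1 0 0 j := by
  simp only [indexProfile, glue_adj_inl_inr, cross, true_and]
  split_ifs <;> first | rfl | omega

theorem deg_glue_inl_zero (h : m + 1 < n) :
    (deg (glue n m) (.inl ⟨0, by omega⟩) : ℝ) = n + m := by
  rw [deg_eq_sum_ite, Fintype.sum_sum_type]
  simp only [glue_adj_inl_zero_inl_indicator, glue_adj_inl_zero_inr_indicator,
    Fin.sum_univ_eq_sum_range (indexProfile m _ _ _ _), sum_range_indexProfile h]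
  ring

theorem gluePotential_sub_glueSwap_inl (h : m + 1 < n) (i : Fin n) :
    gluePotential n m (.inl i) - gluePotential n m (glueSwap n m h (.inl i)) =
      indexProfile m (-1) 0 1 3 i := by
  simp only [glueSwap, indexProfile]
  split_ifs <;> norm_num [gluePotential, *] <;> omega

theorem gluePotential_sub_glueSwap_inr (h : m + 1 < n) (j : Fin n) :
    gluePotential n m (.inr j) - gluePotential n m (glueSwap n m h (.inr j)) =
      indexProfile m 1 0 (-1) (-3) j := by
  simp only [glueSwap, indexProfile]
  split_ifs <;> norm_num [gluePotential, *] <;> omega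

theorem sum_rw_mul_gluePotential_sub (h : m + 1 < n) :
    ∑ u, rw (glue n m) (.inl ⟨0, by omega⟩) u *
        (gluePotential n m u - gluePotential n m (glueSwap n m h u)) =
      (3 * (n : ℝ) - 3 * m - 4) / (n + m) := by
  rw [Fintype.sum_sum_type]
  simp only [rw_apply, deg_glue_inl_zero h, glue_adj_inl_zero_inl_indicator,
    glue_adj_inl_zero_inr_indicator, gluePotential_sub_glueSwap_inl,
    gluePotential_sub_glueSwap_inr, mul_assoc, indexProfile_mul, ← mul_sum,
    Fin.sum_univ_eq_sum_range (indexProfile m _ _ _ _), sum_range_indexProfile h]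
  field_simp
  ring

end Gluing

end OR

theorem glue_wasserstein_bridge (n m : ℕ) (hn : 5 ≤ n) (hm' : m ≤ n - 2) :
    OR.W (OR.glue n m) (OR.rw (OR.glue n m) (Sum.inl (⟨0, by omega⟩ : Fin n)))
        (OR.rw (OR.glue n m) (Sum.inr (⟨0, by omega⟩ : Fin n)))
      = (3 * (n : ℝ) - 3 * m - 4) / ((n : ℝ) + m) := by
  have h : m + 1 < n := by omega
  let e := (OR.glueSwap_involutive h).toPerm
  have hν := OR.rw_apply_eq_of_adj_iff e (OR.glue_adj_inr_zero_glueSwap h)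
  have hf := (OR.glue_connected (n := n) (m := m) (by omega)).sub_le_dist
    fun _ _ => OR.gluePotential_sub_le_one_of_adj
  rw [OR.W_eq_of_perm e (OR.rw_nonneg _) hν hf
    fun u hu => OR.dist_glueSwap_le h u (OR.adj_of_rw_ne_zero hu)]
  exact OR.sum_rw_mul_gluePotential_sub h
end
end
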